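/- Let q be a prime power, n | q−1, and α ∈ F_q a primitive n-th root of unity. Let r, k be positive integers with r | k, (r+1) | n, μ = k/r, and μ(r+1) ≤ n. Let l be an integer with 0 ≤ l ≤ r and b ≥ 1 an integer with gcd(b,n) = 1. Define L = {α^i : i ≡ l (mod r+1)} and D = {α^{j+sb} : s = 0, 1, …, n−μ(r+1)}, where j is an integer with α^j ∈ L. Then the cyclic code over F_q with defining set of zeros L ∪ D is an optimal (n,k,r) cyclic LRC code: it has dimension k, locality r, and minimum distance d = n − k − k/r + 2. -/

import Mathlib

/-!
Let `ψ` be the additive character `e ↦ α ^ e.val` of `ZMod n` and `n = (r + 1) m'`, so that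
`L ∪ D = ψ '' E` for an explicit set `E` of exponents. Fourier inversion on `ZMod n` (possible
because `n ≠ 0` in `F`) shows that the code has dimension `n - #E`, and `#E = n - k` by counting.

The exponents of `L` form the residue class of `l` modulo `r + 1`; by Fourier inversion they
amount to one parity check on each coset `x + m' ℤ/nℤ` of coordinates, which has `r + 1`
elements: this is the locality `r`. The zeros in `D` are `M = n - μ (r + 1) + 1` consecutive
powers of `α ^ b` (shifted by `α ^ j`), so a Vandermonde argument (the BCH bound) gives
`d ≥ M + 1`. Conversely, by dimension count some nonzero codeword vanishes on `μ r - 1`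
coordinates spread over `μ` of these cosets, and the parity checks force it to vanish on
`μ (r + 1) - 2` coordinates, so `d ≤ M + 1`.
-/

open scoped BigOperators

namespace LRC

/-- Hamming weight of a vector. -/
noncomputable def hwt {n : ℕ} {F : Type*} [Zero F] (c : Fin n → F) : ℕ :=
  Nat.card {i : Fin n // c i ≠ 0}

/-- A linear code is cyclic if it is closed under the cyclic shift of coordinates. -/
def IsCyclicCode {n : ℕ} [NeZero n] {F : Type*} [Field F] (C : Submodule F (Fin n → F)) : Prop :=
  ∀ c ∈ C, (fun i : Fin n => c (i - 1)) ∈ C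

/-- `A` is a recovery set for coordinate `i` of the code `C`. -/
def IsRecoverySet {n : ℕ} {F : Type*} [Field F] (C : Submodule F (Fin n → F)) (i : Fin n)
    (A : Finset (Fin n)) : Prop :=
  i ∉ A ∧ ∃ φ : ((j : A) → F) → F, ∀ c ∈ C, c i = φ (fun j => c j)

/-- The code `C` has locality `r`. -/
def HasLocality {n : ℕ} {F : Type*} [Field F] (C : Submodule F (Fin n → F)) (r : ℕ) : Prop :=
  ∀ i : Fin n, ∃ A : Finset (Fin n), A.card ≤ r ∧ IsRecoverySet C i A

/-- Complete defining set of zeros of a cyclic code (locator field = symbol field). -/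
def definingSet {n : ℕ} {F : Type*} [Field F] (C : Submodule F (Fin n → F)) : Set F :=
  {β | β ^ n = 1 ∧ ∀ c ∈ C, ∑ j : Fin n, c j * β ^ (j : ℕ) = 0}

/-- Complete defining set of zeros of a cyclic code in an extension (locator) field `K`. -/
def definingSetExt (n : ℕ) {F K : Type*} [Field F] [Field K] [Algebra F K]
    (C : Submodule F (Fin n → F)) : Set K :=
  {β | β ^ n = 1 ∧ ∀ c ∈ C, ∑ j : Fin n, algebraMap F K (c j) * β ^ (j : ℕ) = 0}

/-- The cyclic code with a given set of zeros. -/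
def codeOfZeros (n : ℕ) {F : Type*} [Field F] (Z : Set F) : Submodule F (Fin n → F) where
  carrier := {c | ∀ β ∈ Z, ∑ j : Fin n, c j * β ^ (j : ℕ) = 0}
  add_mem' := by
    intro a b ha hb β hβ
    have h1 := ha β hβ
    have h2 := hb β hβ
    calc ∑ j : Fin n, (a + b) j * β ^ (j : ℕ)
        = (∑ j : Fin n, a j * β ^ (j : ℕ)) + ∑ j : Fin n, b j * β ^ (j : ℕ) := by
          rw [← Finset.sum_add_distrib]
          exact Finset.sum_congr rfl (by intro j _; simp [add_mul])
      _ = 0 := by rw [h1, h2, add_zero]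
  zero_mem' := by intro β hβ; simp
  smul_mem' := by
    intro t a ha β hβ
    have h1 := ha β hβ
    calc ∑ j : Fin n, (t • a) j * β ^ (j : ℕ)
        = t * ∑ j : Fin n, a j * β ^ (j : ℕ) := by
          rw [Finset.mul_sum]
          exact Finset.sum_congr rfl (by intro j _; simp [mul_assoc])
      _ = 0 := by rw [h1, mul_zero]

/-- Minimum distance: least Hamming weight of a nonzero codeword. -/
noncomputable def minDist {n : ℕ} {F : Type*} [Field F] (C : Submodule F (Fin n → F)) : ℕ :=
  sInf {w | ∃ c ∈ C, c ≠ 0 ∧ hwt c = w}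

/-- The dual code under the standard bilinear form. -/
def dualCode {n : ℕ} {F : Type*} [Field F] (C : Submodule F (Fin n → F)) :
    Submodule F (Fin n → F) where
  carrier := {y | ∀ c ∈ C, ∑ i : Fin n, c i * y i = 0}
  add_mem' := by
    intro a b ha hb c hc
    have h1 := ha c hc
    have h2 := hb c hc
    calc ∑ i : Fin n, c i * (a + b) i
        = (∑ i : Fin n, c i * a i) + ∑ i : Fin n, c i * b i := by
          rw [← Finset.sum_add_distrib]
          exact Finset.sum_congr rfl (by intro j _; simp [mul_add])
      _ = 0 := by rw [h1, h2, add_zero]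
  zero_mem' := by intro c hc; simp
  smul_mem' := by
    intro t a ha c hc
    have h1 := ha c hc
    calc ∑ i : Fin n, c i * (t • a) i
        = t * ∑ i : Fin n, c i * a i := by
          rw [Finset.mul_sum]
          exact Finset.sum_congr rfl (by intro j _; simp [mul_assoc]; ring)
      _ = 0 := by rw [h1, mul_zero]

open Finset

section Codes

variable {F : Type*} [Field F] {n : ℕ}

lemma hwt_eq_card_filter [DecidableEq F] (c : Fin n → F) : hwt c = #{i | c i ≠ 0} := by
  rw [hwt, Nat.card_eq_fintype_card, Fintype.card_subtype]

lemma codeOfZeros_anti {Z Z' : Set F} (h : Z ⊆ Z') : codeOfZeros n Z' ≤ codeOfZeros n Z :=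
  fun _ hc β hβ => hc β (h hβ)

lemma isCyclicCode_codeOfZeros [NeZero n] {Z : Set F} (hZ : ∀ β ∈ Z, β ^ n = 1) :
    IsCyclicCode (codeOfZeros n Z) := by
  intro c hc β hβ
  have hshift (i : Fin n) : β ^ ((i + 1 : Fin n) : ℕ) = β * β ^ (i : ℕ) := by
    rw [Fin.val_add, Fin.val_one', ← pow_eq_pow_mod _ (hZ β hβ), pow_add,
      ← pow_eq_pow_mod _ (hZ β hβ), pow_one, mul_comm]
  calc ∑ i, c (i - 1) * β ^ (i : ℕ) = ∑ i, c i * β ^ ((i + 1 : Fin n) : ℕ) :=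
        (Equiv.sum_comp (Equiv.addRight 1) fun i => c (i - 1) * β ^ (i : ℕ)).symm.trans (by simp)
    _ = β * ∑ i, c i * β ^ (i : ℕ) := by
        rw [mul_sum]
        exact sum_congr rfl fun i _ => by rw [hshift]; ring
    _ = 0 := by rw [hc β hβ, mul_zero]

lemma isRecoverySet_image_of_forall_eq_sum {κ : Type*} [DecidableEq κ]
    {C : Submodule F (Fin n → F)} {i : Fin n} {s : Finset κ} {p : κ → Fin n} (hi : i ∉ s.image p)
    (w : κ → F) (hw : ∀ c ∈ C, c i = ∑ t ∈ s, w t * c (p t)) : IsRecoverySet C i (s.image p) :=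
  ⟨hi, fun v => ∑ t ∈ s.attach, w t * v ⟨p t, mem_image_of_mem p t.2⟩,
    fun c hc => (hw c hc).trans (sum_attach s fun t => w t * c (p t)).symm⟩

lemma minDist_eq_of_forall_le {C : Submodule F (Fin n → F)} {d : ℕ}
    (hle : ∀ c ∈ C, c ≠ 0 → d ≤ hwt c) (hex : ∃ c ∈ C, c ≠ 0 ∧ hwt c ≤ d) : minDist C = d := by
  obtain ⟨c, hc, hne, hcd⟩ := hex
  have hmem : d ∈ {w | ∃ c ∈ C, c ≠ 0 ∧ hwt c = w} := ⟨c, hc, hne, hcd.antisymm (hle c hc hne)⟩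
  refine (Nat.sInf_le hmem).antisymm (le_csInf ⟨d, hmem⟩ ?_)
  rintro _ ⟨c', hc', hne', rfl⟩
  exact hle c' hc' hne'

variable {ι : Type*} [Fintype ι]

lemma exists_mem_ne_zero_forall_eq_zero (C : Submodule F (ι → F)) (T : Finset ι)
    (hT : #T < Module.finrank F C) : ∃ c ∈ C, c ≠ 0 ∧ ∀ i ∈ T, c i = 0 := by
  let restrict : C →ₗ[F] (T → F) := (LinearMap.funLeft F F Subtype.val).comp C.subtype
  obtain ⟨⟨c, hc⟩, hker, hne⟩ := Submodule.exists_mem_ne_zero_of_ne_bot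
    (LinearMap.ker_ne_bot_of_finrank_lt (f := restrict) (by simpa using hT))
  exact ⟨c, hc, fun h => hne (by simpa using h), fun i hi => congrFun hker ⟨i, hi⟩⟩

variable [DecidableEq F]

lemma lt_card_support_of_sum_mul_pow_eq_zero {x y c : ι → F} {M : ℕ}
    (hx : Function.Injective x) (hy : ∀ i, y i ≠ 0) (hc : ∀ s < M, ∑ i, c i * y i * x i ^ s = 0)
    (hne : c ≠ 0) : M < #{i | c i ≠ 0} := by
  by_contra! hle
  set S : Finset ι := {i | c i ≠ 0}
  let e : Fin #S ≃ S := S.equivFin.symm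
  have hvec : Matrix.vecMul (fun t => c (e t) * y (e t)) (Matrix.vandermonde fun t => x (e t))
      = 0 := by
    funext s
    have hsum : ∑ i ∈ S, c i * y i * x i ^ (s : ℕ) = ∑ i, c i * y i * x i ^ (s : ℕ) :=
      sum_subset (subset_univ S) fun i _ hi => by simp [S] at hi; simp [hi]
    calc ∑ t, c (e t) * y (e t) * x (e t) ^ (s : ℕ) = ∑ i : S, c i * y i * x i ^ (s : ℕ) :=
          e.sum_comp fun i : S => c i * y i * x i ^ (s : ℕ)
      _ = ∑ i, c i * y i * x i ^ (s : ℕ) := by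
          rw [sum_coe_sort S fun i => c i * y i * x i ^ (s : ℕ), hsum]
      _ = 0 := hc s (by omega)
  have hzero := Matrix.eq_zero_of_vecMul_eq_zero
    (Matrix.det_vandermonde_ne_zero_iff.mpr (hx.comp (Subtype.val_injective.comp e.injective))) hvec
  obtain ⟨i, hi⟩ := Function.ne_iff.mp hne
  exact hi (by simpa [hy] using congrFun hzero (e.symm ⟨i, by simpa [S] using hi⟩))

/-- Impose vanishing at the `μ r - 1` coordinates `g (a, t)`, `t ≥ 1`, other than `g (μ - 1, 1)`;
then `hloc` also kills `g (a, 0)` for `a < μ - 1`, which makes `μ (r + 1) - 2` zeros. -/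
lemma exists_mem_ne_zero_card_support_add_le (C : Submodule F (ι → F)) {r μ : ℕ} (hr : 0 < r)
    (hμ : 0 < μ) (hdim : μ * r ≤ Module.finrank F C) (g : ℕ × ℕ → ι)
    (hg : Set.InjOn g ↑(range μ ×ˢ range (r + 1)))
    (hloc : ∀ c ∈ C, ∀ a < μ, (∀ t ∈ Ico 1 (r + 1), c (g (a, t)) = 0) → c (g (a, 0)) = 0) :
    ∃ c ∈ C, c ≠ 0 ∧ #{i | c i ≠ 0} + μ * (r + 1) ≤ Fintype.card ι + 2 := by
  classical
  set T := (range μ ×ˢ Ico 1 (r + 1)).erase (μ - 1, 1)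
  have hT : #(T.image g) < Module.finrank F C := by
    have hcard : #T = μ * r - 1 := by
      rw [card_erase_of_mem (by simp; omega), card_product, card_range, Nat.card_Ico,
        Nat.add_sub_cancel]
    have := Nat.mul_pos hμ hr
    exact card_image_le.trans_lt (by omega)
  obtain ⟨c, hc, hne, hcT⟩ := exists_mem_ne_zero_forall_eq_zero C (T.image g) hT
  have hcT' : ∀ a < μ, ∀ t ∈ Ico 1 (r + 1), (a, t) ≠ (μ - 1, 1) → c (g (a, t)) = 0 :=
    fun a ha t ht hat => hcT _ (mem_image_of_mem g (by simp_all [T]))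
  set Z := ((range μ ×ˢ range (r + 1)).erase (μ - 1, 0)).erase (μ - 1, 1)
  have hZ : Z.image g ⊆ ({i | c i = 0} : Finset ι) := by
    simp only [subset_iff, mem_image, mem_filter_univ]
    rintro _ ⟨⟨a, t⟩, hp, rfl⟩
    simp only [Z, mem_erase, mem_product, mem_range, ne_eq, Prod.mk.injEq] at hp
    rcases Nat.eq_zero_or_pos t with rfl | ht
    · exact hloc c hc a hp.2.2.1 fun s hs => hcT' a hp.2.2.1 s hs (by simp; omega)
    · exact hcT' a hp.2.2.1 t (by simp; omega) (by simp; omega)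
  have hcardZ : #(Z.image g) = μ * (r + 1) - 1 - 1 := by
    rw [card_image_of_injOn (hg.mono fun p hp => by simp only [Z, coe_erase] at hp; exact hp.1.1),
      card_erase_of_mem (by simp; omega), card_erase_of_mem (by simp; omega), card_product,
      card_range, card_range]
  have hsplit : #{i | c i = 0} + #{i | c i ≠ 0} = Fintype.card ι :=
    card_filter_add_card_filter_not _
  have := card_le_card hZ
  have : 0 < μ * (r + 1) := by positivity
  exact ⟨c, hc, hne, by omega⟩

end Codes

section Fourier

variable {F : Type*} [Field F] {n : ℕ} [NeZero n] (ψ : AddChar (ZMod n) F)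

lemma finEquiv_apply_eq_natCast (i : Fin n) : ZMod.finEquiv n i = (i : ℕ) := by
  obtain ⟨m, rfl⟩ := Nat.exists_eq_succ_of_ne_zero (NeZero.ne n)
  exact (Fin.cast_val_eq_self i).symm

def dft : (Fin n → F) →ₗ[F] (ZMod n → F) :=
  Matrix.mulVecLin (Matrix.of fun e i => ψ (e * ZMod.finEquiv n i))

lemma dft_apply (c : Fin n → F) (e : ZMod n) :
    dft ψ c e = ∑ i, ψ (e * ZMod.finEquiv n i) * c i :=
  rfl

lemma mem_codeOfZeros_image_iff {E : Set (ZMod n)} {c : Fin n → F} :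
    c ∈ codeOfZeros n (ψ '' E) ↔ ∀ e ∈ E, dft ψ c e = 0 := by
  have hdft (e : ZMod n) : ∑ i, c i * ψ e ^ (i : ℕ) = dft ψ c e := by
    simp only [dft_apply, ← AddChar.map_nsmul_eq_pow, nsmul_eq_mul, finEquiv_apply_eq_natCast,
      mul_comm]
  change (∀ β ∈ ψ '' E, _) ↔ _
  simp only [Set.forall_mem_image, hdft]

lemma isCyclicCode_codeOfZeros_image (E : Set (ZMod n)) :
    IsCyclicCode (codeOfZeros n (ψ '' E)) :=
  isCyclicCode_codeOfZeros <| by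
    rintro _ ⟨e, -, rfl⟩
    rw [← AddChar.map_nsmul_eq_pow, nsmul_eq_mul, ZMod.natCast_self, zero_mul,
      AddChar.map_zero_eq_one]

variable {ψ} (hψ : ψ.IsPrimitive)
include hψ

lemma injective_of_isPrimitive : Function.Injective ψ :=
  AddChar.injective_iff.mpr fun x hx => (hψ.zmod_char_eq_one_iff n x).mp hx

lemma sum_dft_mul_char_neg (c : Fin n → F) (i : Fin n) :
    ∑ e, dft ψ c e * ψ (-(e * ZMod.finEquiv n i)) = n * c i := by
  calc ∑ e, dft ψ c e * ψ (-(e * ZMod.finEquiv n i))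
      = ∑ j, c j * ∑ e, ψ (e * (ZMod.finEquiv n j - ZMod.finEquiv n i)) := by
        simp only [dft_apply, sum_mul, mul_sum]
        rw [sum_comm]
        refine sum_congr rfl fun j _ => sum_congr rfl fun e _ => ?_
        rw [mul_sub, sub_eq_add_neg, AddChar.map_add_eq_mul]
        ring
    _ = n * c i := by simp [AddChar.sum_mulShift _ hψ, sub_eq_zero, mul_comm]

variable [NeZero (n : F)]

lemma dft_injective : Function.Injective (dft ψ) := by
  refine (injective_iff_map_eq_zero _).mpr fun c hc => funext fun i => ?_
  have := sum_dft_mul_char_neg hψ c i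
  simp only [hc, Pi.zero_apply, zero_mul, sum_const_zero] at this
  exact (mul_eq_zero.mp this.symm).resolve_left (NeZero.ne _)

lemma finrank_codeOfZeros_image (E : Finset (ZMod n)) :
    Module.finrank F (codeOfZeros n (ψ '' E)) = n - #E := by
  let f := (LinearMap.funLeft F F (Subtype.val : E → ZMod n)).comp (dft ψ)
  have hker : LinearMap.ker f = codeOfZeros n (ψ '' E) := by
    ext c
    simp [f, mem_codeOfZeros_image_iff, funext_iff]
  have hsurj : Function.Surjective f :=
    (LinearMap.funLeft_surjective_of_injective F F _ Subtype.val_injective).comp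
      ((LinearMap.injective_iff_surjective_of_finrank_eq_finrank (by simp)).mp (dft_injective hψ))
  have := f.finrank_range_add_finrank_ker
  rw [LinearMap.range_eq_top.mpr hsurj, finrank_top, hker] at this
  simp only [Module.finrank_fintype_fun_eq_card, Fintype.card_coe, Fintype.card_fin] at this
  omega

/-- Multiply by `n` and expand `c` by Fourier inversion: summing over `t` first gives a geometric
sum of the `m`-th root of unity `ψ ((l - e) * m')`, which vanishes unless `(e - l) * m' = 0`, and
then `dft ψ c e = 0`. -/
lemma sum_char_mul_apply_add_eq_zero {m m' : ℕ} (hn : n = m * m') (l : ZMod n) {c : Fin n → F}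
    (hc : ∀ e, (e - l) * m' = 0 → dft ψ c e = 0) (x : ZMod n) :
    ∑ t ∈ range m, ψ (l * (t * m' : ℕ)) * c ((ZMod.finEquiv n).symm (x + (t * m' : ℕ))) = 0 := by
  have hgeom (e : ZMod n) (he : (e - l) * m' ≠ 0) : ∑ t ∈ range m, ψ ((l - e) * m') ^ t = 0 := by
    have hne : ψ ((l - e) * m') ≠ 1 := by
      rwa [ne_eq, hψ.zmod_char_eq_one_iff, ← neg_sub, neg_mul, neg_eq_zero]
    have hpow : ψ ((l - e) * m') ^ m = 1 := by
      rw [← AddChar.map_nsmul_eq_pow, nsmul_eq_mul, show (m : ZMod n) * ((l - e) * m')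
        = (l - e) * (m * m' : ℕ) by push_cast; ring, ← hn, ZMod.natCast_self, mul_zero,
        AddChar.map_zero_eq_one]
    rw [geom_sum_eq hne, hpow, sub_self, zero_div]
  have hsplit (t : ℕ) (e : ZMod n) :
      ψ (l * (t * m' : ℕ)) * ψ (-(e * (x + (t * m' : ℕ))))
        = ψ (-(e * x)) * ψ ((l - e) * m') ^ t := by
    rw [← AddChar.map_nsmul_eq_pow, ← AddChar.map_add_eq_mul, ← AddChar.map_add_eq_mul,
      nsmul_eq_mul]
    congr 1
    push_cast
    ring
  refine (mul_eq_zero.mp ?_).resolve_left (NeZero.ne (n : F))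
  calc (n : F) * ∑ t ∈ range m,
        ψ (l * (t * m' : ℕ)) * c ((ZMod.finEquiv n).symm (x + (t * m' : ℕ)))
      = ∑ t ∈ range m, ∑ e, dft ψ c e * (ψ (l * (t * m' : ℕ)) *
          ψ (-(e * (x + (t * m' : ℕ))))) := by
        rw [mul_sum]
        refine sum_congr rfl fun t _ => ?_
        rw [mul_left_comm, ← sum_dft_mul_char_neg hψ, RingEquiv.apply_symm_apply, mul_sum]
        exact sum_congr rfl fun e _ => by ring
    _ = ∑ e, dft ψ c e * ψ (-(e * x)) * ∑ t ∈ range m, ψ ((l - e) * m') ^ t := by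
        simp only [hsplit, mul_sum]
        rw [sum_comm]
        exact sum_congr rfl fun e _ => sum_congr rfl fun t _ => by ring
    _ = 0 := sum_eq_zero fun e _ => by
        by_cases he : (e - l) * m' = 0
        · rw [hc e he, zero_mul, zero_mul]
        · rw [hgeom e he, mul_zero]

end Fourier

/-- In `ZMod (m * m')`, the condition `(e - l) * m' = 0` says `e ≡ l` modulo `m`. -/
def localityExponents (n m' : ℕ) [NeZero n] (l : ZMod n) : Finset (ZMod n) :=
  {e | (e - l) * m' = 0}

def bchExponents (n j b M : ℕ) : Finset (ZMod n) :=
  (range M).image fun s => ((j + s * b : ℕ) : ZMod n)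

lemma natCast_injOn_range {n : ℕ} : Set.InjOn (Nat.cast : ℕ → ZMod n) ↑(range n) :=
  fun a ha b hb h => by
    simpa [Nat.mod_eq_of_lt (mem_range.mp ha), Nat.mod_eq_of_lt (mem_range.mp hb)] using
      (ZMod.natCast_eq_natCast_iff' a b n).mp h

lemma card_filter_dvd_range_mul_add_one {m : ℕ} (hm : 0 < m) (d : ℕ) :
    #{s ∈ range (d * m + 1) | m ∣ s} = d + 1 := by
  have himage : {s ∈ range (d * m + 1) | m ∣ s} = (range (d + 1)).image (· * m) := by
    ext s
    simp only [mem_filter, mem_range, mem_image]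
    constructor
    · rintro ⟨hs, t, rfl⟩
      exact ⟨t, by nlinarith, mul_comm t m⟩
    · rintro ⟨t, ht, rfl⟩
      exact ⟨by nlinarith, dvd_mul_left m t⟩
  rw [himage, card_image_of_injective _ (mul_left_injective₀ hm.ne'), card_range]

lemma add_mul_modEq_iff_dvd {m n j l b s : ℕ} (hm : m ∣ n) (hjl : j ≡ l [MOD m])
    (hb : Nat.Coprime b n) : j + s * b ≡ l [MOD m] ↔ m ∣ s := by
  rw [← (hb.coprime_dvd_right hm).symm.dvd_mul_right, ← Nat.modEq_zero_iff_dvd]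
  constructor
  · exact fun h => Nat.ModEq.add_left_cancel' j (h.trans hjl.symm)
  · exact fun h => (Nat.ModEq.add_left j h).trans hjl

section Exponents

variable {n : ℕ} [NeZero n] {r m' : ℕ} (hn : n = (r + 1) * m')
include hn

lemma natCast_mem_localityExponents_iff (x l : ℕ) :
    (x : ZMod n) ∈ localityExponents n m' l ↔ x ≡ l [MOD r + 1] := by
  have hm' : (m' : ℤ) ≠ 0 := by
    exact_mod_cast fun h => NeZero.ne n (by simp [hn, h])
  rw [localityExponents, mem_filter_univ, Nat.modEq_iff_dvd, dvd_sub_comm,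
    ← Int.mul_dvd_mul_iff_right hm', ← Nat.cast_mul, ← hn,
    ← ZMod.intCast_zmod_eq_zero_iff_dvd]
  push_cast
  rfl

lemma card_localityExponents (l : ℕ) : #(localityExponents n m' l) = m' := by
  have himage : localityExponents n m' l = {x ∈ range n | x ≡ l [MOD r + 1]}.image Nat.cast := by
    ext e
    simp only [mem_image, mem_filter, mem_range]
    constructor
    · intro he
      rw [← ZMod.natCast_zmod_val e, natCast_mem_localityExponents_iff hn] at he
      exact ⟨e.val, ⟨e.val_lt, he⟩, ZMod.natCast_zmod_val e⟩
    · rintro ⟨x, ⟨-, hx⟩, rfl⟩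
      exact (natCast_mem_localityExponents_iff hn x l).mpr hx
  rw [himage, card_image_of_injOn (natCast_injOn_range.mono (coe_subset.mpr (filter_subset _ _))),
    ← Nat.count_eq_card_filter_range, Nat.count_modEq_card _ (Nat.succ_pos r), hn,
    Nat.mul_mod_right, Nat.mul_div_cancel_left _ (Nat.succ_pos r)]
  simp

lemma localityExponents_inter_bchExponents {j l b : ℕ} (hjl : j ≡ l [MOD r + 1])
    (hbn : Nat.Coprime b n) (M : ℕ) :
    localityExponents n m' l ∩ bchExponents n j b M
      = {s ∈ range M | r + 1 ∣ s}.image fun s => ((j + s * b : ℕ) : ZMod n) := by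
  ext e
  simp only [mem_inter, bchExponents, mem_image, mem_filter]
  constructor
  · rintro ⟨he, s, hs, rfl⟩
    exact ⟨s, ⟨hs, (add_mul_modEq_iff_dvd ⟨m', hn⟩ hjl hbn).mp
      ((natCast_mem_localityExponents_iff hn _ _).mp he)⟩, rfl⟩
  · rintro ⟨s, ⟨hs, hdvd⟩, rfl⟩
    exact ⟨(natCast_mem_localityExponents_iff hn _ _).mpr
      ((add_mul_modEq_iff_dvd ⟨m', hn⟩ hjl hbn).mpr hdvd), s, hs, rfl⟩

lemma card_localityExponents_union_bchExponents {j l b μ : ℕ} (hjl : j ≡ l [MOD r + 1])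
    (hbn : Nat.Coprime b n) (hμ : 0 < μ) (hμm' : μ ≤ m') :
    #(localityExponents n m' l ∪ bchExponents n j b ((m' - μ) * (r + 1) + 1)) = n - μ * r := by
  obtain ⟨d, rfl⟩ := Nat.exists_eq_add_of_le hμm'
  rw [Nat.add_sub_cancel_left]
  set M := d * (r + 1) + 1
  have hn' : n = μ * r + (μ + d * (r + 1)) := by rw [hn]; ring
  have hM : M ≤ n := by omega
  have hinj : Set.InjOn (fun s => ((j + s * b : ℕ) : ZMod n)) ↑(range M) := by
    intro s hs s' hs' h
    simp only [Nat.cast_add, Nat.cast_mul, add_right_inj] at h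
    have hb : IsUnit (b : ZMod n) := (ZMod.isUnit_iff_coprime b n).mpr hbn
    exact natCast_injOn_range (by simp at hs ⊢; omega) (by simp at hs' ⊢; omega)
      (hb.mul_left_injective h)
  have hcardD : #(bchExponents n j b M) = M := (card_image_of_injOn hinj).trans (card_range M)
  have hunion := card_union_add_card_inter (localityExponents n (μ + d) l) (bchExponents n j b M)
  rw [localityExponents_inter_bchExponents hn hjl hbn,
    card_image_of_injOn (hinj.mono (coe_subset.mpr (filter_subset _ _))),
    card_filter_dvd_range_mul_add_one (Nat.succ_pos r), card_localityExponents hn, hcardD] at hunion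
  omega

end Exponents

section CodeOfZeros

variable {F : Type*} [Field F] {n : ℕ} [NeZero n] {ψ : AddChar (ZMod n) F} (hψ : ψ.IsPrimitive)
include hψ

lemma lt_hwt_of_mem_codeOfZeros [DecidableEq F] {j b M : ℕ} (hb : IsUnit (b : ZMod n))
    {Z : Set F} (hZ : ψ '' ↑(bchExponents n j b M) ⊆ Z) {c : Fin n → F}
    (hc : c ∈ codeOfZeros n Z) (hne : c ≠ 0) : M < hwt c := by
  rw [hwt_eq_card_filter]
  refine lt_card_support_of_sum_mul_pow_eq_zero (x := fun i => ψ (b * ZMod.finEquiv n i))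
    (y := fun i => ψ (j * ZMod.finEquiv n i)) (fun i i' h => ?_)
    (fun i => (AddChar.val_isUnit ψ _).ne_zero) (fun s hs => ?_) hne
  · exact (ZMod.finEquiv n).injective (hb.mul_right_injective (injective_of_isPrimitive hψ h))
  · rw [← (mem_codeOfZeros_image_iff ψ).mp (codeOfZeros_anti hZ hc) _
      (mem_image_of_mem _ (mem_range.mpr hs)), dft_apply]
    refine sum_congr rfl fun i _ => ?_
    rw [← AddChar.map_nsmul_eq_pow, mul_assoc, ← AddChar.map_add_eq_mul, mul_comm (c i),
      nsmul_eq_mul]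
    push_cast
    ring_nf

variable [NeZero (n : F)] {r m' : ℕ} (hn : n = (r + 1) * m') (l : ZMod n) {Z : Set F}
  (hZ : ψ '' ↑(localityExponents n m' l) ⊆ Z)
include hn hZ

lemma apply_symm_eq_neg_sum {c : Fin n → F} (hc : c ∈ codeOfZeros n Z) (x : ZMod n) :
    c ((ZMod.finEquiv n).symm x) = -∑ t ∈ Ico 1 (r + 1),
      ψ (l * (t * m' : ℕ)) * c ((ZMod.finEquiv n).symm (x + (t * m' : ℕ))) := by
  have hrel := sum_char_mul_apply_add_eq_zero hψ hn l (fun e he =>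
    (mem_codeOfZeros_image_iff ψ).mp (codeOfZeros_anti hZ hc) e (by simpa [localityExponents]))
    x
  rw [range_eq_Ico, sum_eq_sum_Ico_succ_bot (Nat.succ_pos r)] at hrel
  simp only [Nat.cast_zero, zero_mul, mul_zero, AddChar.map_zero_eq_one, one_mul, add_zero,
    Nat.cast_mul] at hrel ⊢
  exact eq_neg_of_add_eq_zero_left hrel

lemma hasLocality_codeOfZeros : HasLocality (codeOfZeros n Z) r := by
  intro i
  let p t : Fin n := (ZMod.finEquiv n).symm (ZMod.finEquiv n i + (t * m' : ℕ))
  refine ⟨(Ico 1 (r + 1)).image p, card_image_le.trans (by simp), ?_⟩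
  refine isRecoverySet_image_of_forall_eq_sum ?_ (fun t => -ψ (l * (t * m' : ℕ)))
    fun c hc => ?_
  · simp only [mem_image, mem_Ico, not_exists, not_and, p]
    intro t ht hti
    rw [RingEquiv.symm_apply_eq, add_eq_left, ZMod.natCast_eq_zero_iff] at hti
    have hm' : 0 < m' := Nat.pos_of_ne_zero fun h => NeZero.ne n (by simp [hn, h])
    have : t * m' < n := hn ▸ Nat.mul_lt_mul_of_pos_right ht.2 hm'
    exact (Nat.mul_pos ht.1 hm').ne' (Nat.eq_zero_of_dvd_of_lt hti this)
  · have := apply_symm_eq_neg_sum hψ hn l hZ hc (ZMod.finEquiv n i)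
    simp only [RingEquiv.symm_apply_apply] at this
    simp only [this, neg_mul, sum_neg_distrib, p]

lemma exists_mem_codeOfZeros_hwt_add_le [DecidableEq F] {μ : ℕ} (hr : 0 < r) (hμ : 0 < μ)
    (hμm' : μ ≤ m') (hdim : μ * r ≤ Module.finrank F (codeOfZeros n Z)) :
    ∃ c ∈ codeOfZeros n Z, c ≠ 0 ∧ hwt c + μ * (r + 1) ≤ n + 2 := by
  let g (p : ℕ × ℕ) : Fin n := (ZMod.finEquiv n).symm ((p.1 + p.2 * m' : ℕ) : ZMod n)
  have hg : Set.InjOn g ↑(range μ ×ˢ range (r + 1)) := by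
    rintro ⟨a, t⟩ hat ⟨a', t'⟩ hat' h
    simp only [coe_product, coe_range, Set.mem_prod, Set.mem_Iio] at hat hat'
    have hlt {a t : ℕ} (ha : a < μ) (ht : t < r + 1) : a + t * m' ∈ range n := by
      rw [mem_range, hn]
      nlinarith
    have heq := natCast_injOn_range (hlt hat.1 hat.2) (hlt hat'.1 hat'.2)
      ((ZMod.finEquiv n).symm.injective h)
    have hmod := congrArg (· % m') heq
    have hdiv := congrArg (· / m') heq
    simp only [Nat.add_mul_mod_self_right, Nat.add_mul_div_right _ _ (hμ.trans_le hμm'),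
      Nat.mod_eq_of_lt (hat.1.trans_le hμm'), Nat.mod_eq_of_lt (hat'.1.trans_le hμm'),
      Nat.div_eq_of_lt (hat.1.trans_le hμm'), Nat.div_eq_of_lt (hat'.1.trans_le hμm'),
      zero_add] at hmod hdiv
    rw [hmod, hdiv]
  obtain ⟨c, hc, hne, hcard⟩ := exists_mem_ne_zero_card_support_add_le _ hr hμ hdim g hg
    fun c hc a _ hzero => by
      simp only [g, zero_mul, add_zero]
      rw [apply_symm_eq_neg_sum hψ hn l hZ hc, sum_eq_zero fun t ht => ?_, neg_zero]
      have := hzero t ht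
      simp only [g, Nat.cast_add] at this
      rw [this, mul_zero]
  rw [Fintype.card_fin] at hcard
  exact ⟨c, hc, hne, by rwa [hwt_eq_card_filter]⟩

end CodeOfZeros

section Zeros

variable {F : Type*} [Field F] {n : ℕ} {α : F} {ψ : AddChar (ZMod n) F}
  (hψα : ∀ x : ℕ, ψ x = α ^ x)
include hψα

lemma setOf_mod_eq_eq_image [NeZero n] {r m' l : ℕ} (hn : n = (r + 1) * m') (hl : l ≤ r) :
    {β | ∃ i : ℕ, i % (r + 1) = l ∧ β = α ^ i} = ψ '' ↑(localityExponents n m' l) := by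
  ext β
  constructor
  · rintro ⟨i, hi, rfl⟩
    refine ⟨i, (natCast_mem_localityExponents_iff hn i l).mpr ?_, hψα i⟩
    rw [Nat.ModEq, hi, Nat.mod_eq_of_lt (Nat.lt_succ_of_le hl)]
  · rintro ⟨e, he, rfl⟩
    rw [mem_coe, ← ZMod.natCast_zmod_val e, natCast_mem_localityExponents_iff hn] at he
    refine ⟨e.val, ?_, by rw [← hψα, ZMod.natCast_zmod_val]⟩
    rw [he, Nat.mod_eq_of_lt (Nat.lt_succ_of_le hl)]

lemma setOf_pow_add_mul_eq_image (j b N : ℕ) :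
    {β | ∃ s : ℕ, s ≤ N ∧ β = α ^ (j + s * b)} = ψ '' ↑(bchExponents n j b (N + 1)) := by
  ext β
  constructor
  · rintro ⟨s, hs, rfl⟩
    exact ⟨_, mem_image_of_mem _ (mem_range.mpr (Nat.lt_succ_of_le hs)), hψα _⟩
  · rintro ⟨_, he, rfl⟩
    obtain ⟨s, hs, rfl⟩ := mem_image.mp he
    exact ⟨s, Nat.le_of_lt_succ (mem_range.mp hs), hψα _⟩

end Zeros

section OptimalCode

variable {F : Type*} [Field F] {n : ℕ} [NeZero n] {ψ : AddChar (ZMod n) F} (hψ : ψ.IsPrimitive)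
  {r m' : ℕ} (hn : n = (r + 1) * m')
include hψ hn

lemma modEq_of_char_mem {j l : ℕ} (h : ψ j ∈ ψ '' ↑(localityExponents n m' l)) :
    j ≡ l [MOD r + 1] := by
  obtain ⟨e, he, hej⟩ := h
  rwa [injective_of_isPrimitive hψ hej, mem_coe, natCast_mem_localityExponents_iff hn] at he

variable [NeZero (n : F)] {μ j l b : ℕ} (hμ : 0 < μ) (hμm' : μ ≤ m')
  (hjl : j ≡ l [MOD r + 1]) (hbn : Nat.Coprime b n)
include hμ hμm' hjl hbn

lemma finrank_codeOfZeros_localityExponents_union_bchExponents :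
    Module.finrank F (codeOfZeros n
      (ψ '' ↑(localityExponents n m' l ∪ bchExponents n j b (n - μ * (r + 1) + 1)))) = μ * r := by
  have hM : n - μ * (r + 1) = (m' - μ) * (r + 1) := by rw [hn, Nat.sub_mul, mul_comm]
  rw [finrank_codeOfZeros_image hψ, hM,
    card_localityExponents_union_bchExponents hn hjl hbn hμ hμm']
  have : μ * r ≤ n := by nlinarith
  omega

lemma minDist_codeOfZeros_localityExponents_union_bchExponents [DecidableEq F] (hr : 0 < r) :
    minDist (codeOfZeros n
      (ψ '' ↑(localityExponents n m' l ∪ bchExponents n j b (n - μ * (r + 1) + 1)))) =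
      n - μ * (r + 1) + 2 := by
  refine minDist_eq_of_forall_le (fun c hc hne => lt_hwt_of_mem_codeOfZeros hψ
    ((ZMod.isUnit_iff_coprime b n).mpr hbn) (Set.image_mono (coe_subset.mpr subset_union_right))
    hc hne) ?_
  obtain ⟨c, hc, hne, hwt⟩ := exists_mem_codeOfZeros_hwt_add_le hψ hn l
    (Set.image_mono (coe_subset.mpr subset_union_left)) hr hμ hμm'
    (finrank_codeOfZeros_localityExponents_union_bchExponents hψ hn hμ hμm' hjl hbn).ge
  exact ⟨c, hc, hne, by omega⟩

end OptimalCode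

theorem stmt3_general {F : Type*} [Field F] (n r k μ l b : ℕ) [NeZero n]
    (α : F) (hα : IsPrimitiveRoot α n)
    (hr : 0 < r) (hk : 0 < k) (hrk : r ∣ k) (hrn : (r + 1) ∣ n)
    (hμ : μ = k / r) (hμn : μ * (r + 1) ≤ n)
    (hl : l ≤ r) (hbn : Nat.Coprime b n)
    (L D : Set F)
    (hL : L = {β | ∃ i : ℕ, i % (r + 1) = l ∧ β = α ^ i})
    (j : ℕ) (hj : α ^ j ∈ L)
    (hD : D = {β | ∃ s : ℕ, s ≤ n - μ * (r + 1) ∧ β = α ^ (j + s * b)}) :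
    IsCyclicCode (codeOfZeros n (L ∪ D)) ∧
    Module.finrank F (codeOfZeros n (L ∪ D)) = k ∧
    HasLocality (codeOfZeros n (L ∪ D)) r ∧
    minDist (codeOfZeros n (L ∪ D)) = n - k - k / r + 2 := by
  classical
  have := hα.neZero'
  obtain ⟨m', hn⟩ := hrn
  obtain ⟨ψ, hψ, hψα⟩ : ∃ ψ : AddChar (ZMod n) F, ψ.IsPrimitive ∧ ∀ x : ℕ, ψ x = α ^ x :=
    ⟨_, AddChar.zmodChar_primitive_of_primitive_root n hα, AddChar.zmodChar_apply' _⟩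
  have hkμ : k = μ * r := by rw [hμ, Nat.div_mul_cancel hrk]
  have hμ0 : 0 < μ := Nat.pos_of_ne_zero fun h => by simp [h] at hkμ; omega
  have hμm' : μ ≤ m' := Nat.le_of_mul_le_mul_left (by rwa [mul_comm, ← hn]) (Nat.succ_pos r)
  rw [setOf_mod_eq_eq_image hψα hn hl] at hL
  have hjl := modEq_of_char_mem hψ hn (hψα j ▸ hL ▸ hj)
  rw [hL, hD, setOf_pow_add_mul_eq_image hψα, ← Set.image_union, ← coe_union, hkμ,
    Nat.mul_div_cancel _ hr, minDist_codeOfZeros_localityExponents_union_bchExponents hψ hn hμ0 hμm'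
      hjl hbn hr]
  have : μ * (r + 1) = μ * r + μ := by ring
  exact ⟨isCyclicCode_codeOfZeros_image ψ _,
    finrank_codeOfZeros_localityExponents_union_bchExponents hψ hn hμ0 hμm' hjl hbn,
    hasLocality_codeOfZeros hψ hn l (Set.image_mono (coe_subset.mpr subset_union_left)), by omega⟩

/-- the cyclic code with defining set of zeros `L ∪ D` is an optimal (n,k,r)
cyclic LRC code. -/
theorem stmt3 {F : Type*} [Field F] [Fintype F] (q n r k μ l b : ℕ) [NeZero n]
    (hq : Fintype.card F = q) (hn : n ∣ q - 1)
    (α : F) (hα : IsPrimitiveRoot α n)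
    (hr : 0 < r) (hk : 0 < k) (hrk : r ∣ k) (hrn : (r + 1) ∣ n)
    (hμ : μ = k / r) (hμn : μ * (r + 1) ≤ n)
    (hl : l ≤ r) (hb : 1 ≤ b) (hbn : Nat.Coprime b n)
    (L D : Set F)
    (hL : L = {β | ∃ i : ℕ, i % (r + 1) = l ∧ β = α ^ i})
    (j : ℕ) (hj : α ^ j ∈ L)
    (hD : D = {β | ∃ s : ℕ, s ≤ n - μ * (r + 1) ∧ β = α ^ (j + s * b)}) :
    IsCyclicCode (codeOfZeros n (L ∪ D)) ∧
    Module.finrank F (codeOfZeros n (L ∪ D)) = k ∧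
    HasLocality (codeOfZeros n (L ∪ D)) r ∧
    minDist (codeOfZeros n (L ∪ D)) = n - k - k / r + 2 :=
  stmt3_general n r k μ l b α hα hr hk hrk hrn hμ hμn hl hbn L D hL j hj hD

end LRC
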